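/- arXiv:2106.15956 — 2 statements merged into one kernel-verified Lean document; each statement's English description precedes it below -/
import Mathlib

section
/- Let a continuous linear map λ:C→ℝ^q and z∈[−r,0) be given. Then there exists φ∈C^1 with φ'(0)=1, λφ=0, and φ(t)=0 for all t∈[−r,z]∪{0}. -/
/-!
For `δ > 0` let `b` be a bump function equal to `1` near `0` and supported in `(-δ, δ)`. Then
`t ↦ t · b(t)` has derivative `1` at `0`, vanishes on `[-r, -δ] ∪ {0}` and has sup norm at most
`δ`, so `λ` maps it to a vector of norm at most `‖λ‖ δ`. Hence `(0, 1)` lies in the closure of the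
image of the space `Z` of `C¹` maps vanishing on `[-r, z] ∪ {0}` under `φ ↦ (λφ, φ'(0))`. This
image is a subspace of the finite-dimensional space `ℝ^q × ℝ`, hence closed, and a preimage of
`(0, 1)` in `Z` is the required map.
-/

set_option linter.unusedSectionVars false

open Set

noncomputable section

/-- The compact interval `[-r,0]`. -/
abbrev Icc0 (r : ℝ) : Set ℝ := Set.Icc (-r) 0

/-- Extension of a continuous map on `[-r,0]` to `ℝ`, by the value `0` outside. -/
def extFun {r : ℝ} {E : Type*} [TopologicalSpace E] [Zero E] (φ : C(Icc0 r, E)) : ℝ → E :=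
  fun t => if h : t ∈ Icc0 r then φ ⟨t, h⟩ else 0

section extlemmas

variable {r : ℝ} {E : Type*} [NormedAddCommGroup E] [NormedSpace ℝ E]

lemma extFun_add (φ ψ : C(Icc0 r, E)) : extFun (φ + ψ) = extFun φ + extFun ψ := by
  funext t; by_cases h : t ∈ Icc0 r <;> simp [extFun, h]

lemma extFun_zero : extFun (0 : C(Icc0 r, E)) = 0 := by
  funext t; by_cases h : t ∈ Icc0 r <;> simp [extFun, h]

lemma extFun_smul (c : ℝ) (φ : C(Icc0 r, E)) : extFun (c • φ) = c • extFun φ := by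
  funext t; by_cases h : t ∈ Icc0 r <;> simp [extFun, h]

end extlemmas

/-- The space `C¹([-r,0],E)`, realized as the closed subspace of pairs `(φ, φ')` in
`C([-r,0],E) × C([-r,0],E)` such that `φ` is differentiable on `[-r,0]` with derivative `φ'`. -/
def C1sub (r : ℝ) (E : Type*) [NormedAddCommGroup E] [NormedSpace ℝ E] :
    Submodule ℝ (C(Icc0 r, E) × C(Icc0 r, E)) where
  carrier := {p | ∀ t ∈ Icc0 r, HasDerivWithinAt (extFun p.1) (extFun p.2 t) (Icc0 r) t}
  add_mem' := by
    intro p q hp hq t ht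
    have h := (hp t ht).add (hq t ht)
    have e1 : extFun (p + q).1 = fun s => extFun p.1 s + extFun q.1 s := by
      simp [Prod.fst_add, extFun_add]; rfl
    have e2 : extFun (p + q).2 t = extFun p.2 t + extFun q.2 t := by
      simp [Prod.snd_add, extFun_add]
    rw [e1, e2]; exact h
  zero_mem' := by
    intro t ht
    have e1 : extFun (0 : C(Icc0 r, E) × C(Icc0 r, E)).1 = fun _ : ℝ => (0 : E) := by
      simp [extFun_zero]; rfl
    have e2 : extFun (0 : C(Icc0 r, E) × C(Icc0 r, E)).2 t = 0 := by
      simp [extFun_zero]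
    rw [e1, e2]; exact hasDerivWithinAt_const _ _ _
  smul_mem' := by
    intro c p hp t ht
    have h := (hp t ht).const_smul c
    have e1 : extFun (c • p).1 = fun s => c • extFun p.1 s := by
      simp [Prod.smul_fst, extFun_smul]; rfl
    have e2 : extFun (c • p).2 t = c • extFun p.2 t := by
      simp [Prod.smul_snd, extFun_smul]
    rw [e1, e2]; exact h

/-- The Banach space `C¹([-r,0],E)`. -/
abbrev C1 (r : ℝ) (E : Type*) [NormedAddCommGroup E] [NormedSpace ℝ E] := ↥(C1sub r E)

section C1ops

variable {r : ℝ} {E : Type*} [NormedAddCommGroup E] [NormedSpace ℝ E]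

/-- Evaluation `φ(t)` of `φ ∈ C¹([-r,0],E)` (extended by `0` outside `[-r,0]`). -/
def evC (φ : C1 r E) (t : ℝ) : E := extFun φ.1.1 t

/-- Evaluation `φ'(t)` of the derivative of `φ ∈ C¹([-r,0],E)`. -/
def dvC (φ : C1 r E) (t : ℝ) : E := extFun φ.1.2 t

end C1ops

/-- The continuous linear map `ℝ → (Fin n → ℝ)` sending `x` to the vector `x·e_ν`. -/
def sCLM (n : ℕ) (ν : Fin n) : ℝ →L[ℝ] (Fin n → ℝ) :=
  ContinuousLinearMap.pi (fun j => if j = ν then ContinuousLinearMap.id ℝ ℝ else 0)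

/-- `ψ · e_ν` for a continuous map `ψ`. -/
def CMsingle {r : ℝ} {n : ℕ} (ν : Fin n) (φ : C(Icc0 r, ℝ)) : C(Icc0 r, Fin n → ℝ) :=
  ⟨fun t => sCLM n ν (φ t), (sCLM n ν).continuous.comp φ.continuous⟩

lemma extFun_CMsingle {r : ℝ} {n : ℕ} (ν : Fin n) (φ : C(Icc0 r, ℝ)) (t : ℝ) :
    extFun (CMsingle ν φ) t = sCLM n ν (extFun φ t) := by
  by_cases h : t ∈ Icc0 r <;> simp [extFun, CMsingle, h]

/-- `ψ · e_ν ∈ C¹([-r,0],ℝⁿ)` for a scalar function `ψ ∈ C¹([-r,0],ℝ)`. -/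
def singleC1 {r : ℝ} {n : ℕ} (ν : Fin n) (φ : C1 r ℝ) : C1 r (Fin n → ℝ) :=
  ⟨(CMsingle ν φ.1.1, CMsingle ν φ.1.2), by
    intro t ht
    have h := ((sCLM n ν).hasFDerivAt).comp_hasDerivWithinAt t (φ.2 t ht)
    have e1 : extFun (CMsingle ν φ.1.1) = (sCLM n ν) ∘ (extFun φ.1.1) := by
      funext s; exact extFun_CMsingle ν φ.1.1 s
    rw [show (CMsingle ν φ.1.1, CMsingle ν φ.1.2).1 = CMsingle ν φ.1.1 from rfl,
      show (CMsingle ν φ.1.1, CMsingle ν φ.1.2).2 = CMsingle ν φ.1.2 from rfl,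
      e1, extFun_CMsingle]
    exact h⟩

/-- The linear map `ℝⁿ → C¹([-r,0],ℝⁿ)`, `x ↦ Σ_ν x_ν ψ_ν · e_ν` (the map `Y·x`). -/
def Ymap {r : ℝ} {n : ℕ} (ψ : Fin n → C1 r ℝ) : (Fin n → ℝ) →ₗ[ℝ] C1 r (Fin n → ℝ) where
  toFun x := ∑ ν, x ν • singleC1 ν (ψ ν)
  map_add' x y := by simp [add_smul, Finset.sum_add_distrib]
  map_smul' c x := by simp [smul_smul, Finset.smul_sum]

/-- The closed subspace `X₀ = {φ ∈ C¹ : φ'(0) = 0}`. -/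
def X0sub (r : ℝ) (n : ℕ) : Submodule ℝ (C1 r (Fin n → ℝ)) where
  carrier := {φ | dvC φ 0 = 0}
  add_mem' := by
    intro φ ψ hφ hψ
    have : dvC (φ + ψ) 0 = dvC φ 0 + dvC ψ 0 := by
      simp [dvC, extFun_add]
    rw [Set.mem_setOf_eq] at *
    rw [this, hφ, hψ, add_zero]
  zero_mem' := by
    show dvC (0 : C1 r (Fin n → ℝ)) 0 = 0
    simp [dvC, extFun_zero]
  smul_mem' := by
    intro c φ hφ
    have : dvC (c • φ) 0 = c • dvC φ 0 := by simp [dvC, extFun_smul]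
    rw [Set.mem_setOf_eq] at *
    rw [this, hφ, smul_zero]

/-- The projection-like map `R φ = φ − Y·φ'(0)`. -/
def RKmap {r : ℝ} {n : ℕ} (ψ : Fin n → C1 r ℝ) (φ : C1 r (Fin n → ℝ)) : C1 r (Fin n → ℝ) :=
  φ - Ymap ψ (dvC φ 0)

section diffeos

variable {E : Type*} [NormedAddCommGroup E] [NormedSpace ℝ E]
variable {E' : Type*} [NormedAddCommGroup E'] [NormedSpace ℝ E']

/-- `f` defines a `C¹`-diffeomorphism from `s` onto `t`: `f` is continuously differentiable
on `s`, injective on `s`, maps `s` onto `t`, and has a continuously differentiable inverse. -/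
def IsC1DiffeoOn (f : E → E') (s : Set E) (t : Set E') : Prop :=
  ContDiffOn ℝ 1 f s ∧ Set.InjOn f s ∧ f '' s = t ∧
    ∃ g : E' → E, ContDiffOn ℝ 1 g t ∧ Set.InvOn g f s t

/-- The tangent cone of `X ⊆ E` at `x`: all velocities `c'(0)` of continuously differentiable
curves in `X` through `x`. -/
def tangentSet (X : Set E) (x : E) : Set E :=
  {v | ∃ (c : ℝ → E) (ε : ℝ), 0 < ε ∧ ContDiffOn ℝ 1 c (Set.Ioo (-ε) ε) ∧
      (∀ s ∈ Set.Ioo (-ε) ε, c s ∈ X) ∧ c 0 = x ∧ HasDerivWithinAt c v (Set.Ioo (-ε) ε) 0}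

/-- `X` is a continuously differentiable submanifold of codimension `m` of `E`. -/
def IsC1SubmanifoldCodim (X : Set E) (m : ℕ) : Prop :=
  ∀ x ∈ X, ∃ (O : Set E) (Φ : E → E) (H Q : Submodule ℝ E),
    IsOpen O ∧ x ∈ O ∧ IsClosed (H : Set E) ∧ IsCompl H Q ∧ Module.finrank ℝ Q = m ∧
    IsOpen (Φ '' O) ∧ IsC1DiffeoOn Φ O (Φ '' O) ∧ Φ '' (X ∩ O) = (H : Set E) ∩ (Φ '' O)

/-- `X` is a continuously differentiable submanifold of `E`. -/
def IsC1Submanifold (X : Set E) : Prop :=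
  ∀ x ∈ X, ∃ (O : Set E) (Φ : E → E) (H : Submodule ℝ E),
    IsOpen O ∧ x ∈ O ∧ IsClosed (H : Set E) ∧
    IsOpen (Φ '' O) ∧ IsC1DiffeoOn Φ O (Φ '' O) ∧ Φ '' (X ∩ O) = (H : Set E) ∩ (Φ '' O)

/-- `A` is an almost graph over `H`. -/
def IsAlmostGraphOver (A : Set E) (H : Set E) : Prop :=
  ∃ (dm : Set E) (α : E → E), dm ⊆ H ∧ ContDiffOn ℝ 1 α dm ∧
    (∀ ζ ∈ dm ∩ A, α ζ = 0) ∧ (∀ ζ ∈ dm \ A, α ζ ∉ H) ∧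
    IsC1DiffeoOn (fun ζ => ζ + α ζ) dm A

end diffeos

/-- The data of the delay differential system
`x'(t) = g(x(t-d_1(Lx_t)),…,x(t-d_kk(Lx_t)))`. -/
structure Setting (r : ℝ) (n kk : ℕ) (F : Type*) [NormedAddCommGroup F] [NormedSpace ℝ F] where
  /-- The continuous linear map `L : C([-r,0],ℝⁿ) → F`. -/
  L : C(Icc0 r, Fin n → ℝ) →L[ℝ] F
  /-- The open set `W ⊆ F`. -/
  W : Set F
  Wopen : IsOpen W
  /-- The delay functions `d_k : W → [0,r]`. -/
  d : Fin kk → F → ℝ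
  d_smooth : ∀ k, ContDiffOn ℝ 1 (d k) W
  d_mem : ∀ k, ∀ w ∈ W, d k w ∈ Set.Icc (0:ℝ) r
  /-- The open set `V ⊆ (ℝⁿ)^kk`. -/
  V : Set (Fin kk → Fin n → ℝ)
  Vopen : IsOpen V
  /-- The right hand side function `g : V → ℝⁿ`. -/
  g : (Fin kk → Fin n → ℝ) → Fin n → ℝ
  g_smooth : ContDiffOn ℝ 1 g V

namespace Setting

variable {r : ℝ} {n kk : ℕ} {F : Type*} [NormedAddCommGroup F] [NormedSpace ℝ F]
variable (S : Setting r n kk F)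

/-- `L` applied to (the `C⁰`-part of) `φ ∈ C¹`. -/
def Lof (φ : C1 r (Fin n → ℝ)) : F := S.L φ.1.1

/-- `φ̂ = (φ(-d_1(Lφ)),…,φ(-d_kk(Lφ)))`. -/
def hat (φ : C1 r (Fin n → ℝ)) : Fin kk → Fin n → ℝ := fun k => evC φ (-(S.d k (S.Lof φ)))

/-- The domain `U = {φ ∈ C¹ : Lφ ∈ W, φ̂ ∈ V}`. -/
def U : Set (C1 r (Fin n → ℝ)) := {φ | S.Lof φ ∈ S.W ∧ S.hat φ ∈ S.V}

/-- The right hand side `f(φ) = g(φ̂)`. -/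
def fmap (φ : C1 r (Fin n → ℝ)) : Fin n → ℝ := S.g (S.hat φ)

/-- The solution manifold `X_f = {φ ∈ U : φ'(0) = f(φ)}`. -/
def Xf : Set (C1 r (Fin n → ℝ)) := {φ | φ ∈ S.U ∧ dvC φ 0 = S.fmap φ}

/-- `W_J = {w ∈ W : d_j(w)=0 for j∈J, d_k(w)>0 for k∉J}`. -/
def WJ (J : Finset (Fin kk)) : Set F :=
  {w | w ∈ S.W ∧ (∀ j ∈ J, S.d j w = 0) ∧ ∀ k ∉ J, 0 < S.d k w}

/-- `W^J = {w ∈ W : d_k(w)>0 for k∉J}`. -/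
def WupJ (J : Finset (Fin kk)) : Set F :=
  {w | w ∈ S.W ∧ ∀ k ∉ J, 0 < S.d k w}

/-- `U_J = U ∩ L⁻¹(W_J)`. -/
def UJ (J : Finset (Fin kk)) : Set (C1 r (Fin n → ℝ)) := {φ | φ ∈ S.U ∧ S.Lof φ ∈ S.WJ J}

/-- `U^J = U ∩ L⁻¹(W^J)`. -/
def UupJ (J : Finset (Fin kk)) : Set (C1 r (Fin n → ℝ)) := {φ | φ ∈ S.U ∧ S.Lof φ ∈ S.WupJ J}

/-- `X_{fJ} = X_f ∩ U_J`. -/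
def XfJ (J : Finset (Fin kk)) : Set (C1 r (Fin n → ℝ)) := S.Xf ∩ S.UJ J

/-- Hypothesis (b): `g` is bounded. -/
def HypB : Prop := ∃ M, ∀ v ∈ S.V, ‖S.g v‖ ≤ M

/-- Hypothesis (d1b): `d₁ = 0` on `W` and `g` is bounded on subsets of `V` with bounded
first component. -/
def HypD1B (hk : 0 < kk) : Prop :=
  (∀ w ∈ S.W, S.d ⟨0, hk⟩ w = 0) ∧
  ∀ B : Set (Fin n → ℝ), Bornology.IsBounded B →
    Bornology.IsBounded (S.g '' {v | v ∈ S.V ∧ v ⟨0, hk⟩ ∈ B})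

/-- The partial derivative `∂_{(k-1)n+ν} g_μ (φ̂)`. -/
def dgCoeff (φ : C1 r (Fin n → ℝ)) (k : Fin kk) (ν : Fin n) (μ : Fin n) : ℝ :=
  fderivWithin ℝ S.g S.V (S.hat φ) (Pi.single k (Pi.single ν 1)) μ

/-- The right hand side of the formula for `Df_μ(φ)χ`. -/
def dFormula (φ χ : C1 r (Fin n → ℝ)) (μ : Fin n) : ℝ :=
  ∑ k, ∑ ν, S.dgCoeff φ k ν μ *
    (evC χ (-(S.d k (S.Lof φ))) ν -
      dvC φ (-(S.d k (S.Lof φ))) ν * fderivWithin ℝ (S.d k) S.W (S.Lof φ) (S.Lof χ))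

/-- The map `R^J(φ) = φ − Y_J(Lφ)·φ'(0)` of Section 4 of the paper. -/
def RJmap (y : Fin n → F → C1 r ℝ) (φ : C1 r (Fin n → ℝ)) : C1 r (Fin n → ℝ) :=
  φ - Ymap (fun ν => y ν (S.Lof φ)) (dvC φ 0)

end Setting

lemma extFun_restrict {r : ℝ} {E : Type*} [TopologicalSpace E] [Zero E] (f : C(ℝ, E)) {t : ℝ}
    (ht : t ∈ Icc0 r) : extFun (f.restrict (Icc0 r)) t = f t := by
  simp [extFun, ht]

namespace C1

variable {r : ℝ} {E : Type*} [NormedAddCommGroup E] [NormedSpace ℝ E]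

def ofContDiff (r : ℝ) (f : ℝ → E) (hf : ContDiff ℝ 1 f) : C1 r E :=
  ⟨(ContinuousMap.restrict (Icc0 r) ⟨f, hf.continuous⟩,
    ContinuousMap.restrict (Icc0 r) ⟨deriv f, hf.continuous_deriv le_rfl⟩), fun t ht =>
    ((hf.differentiable one_ne_zero t).hasDerivAt.hasDerivWithinAt.congr
      (fun _ hs => extFun_restrict _ hs) (extFun_restrict _ ht)).congr_deriv
      (extFun_restrict ⟨deriv f, hf.continuous_deriv le_rfl⟩ ht).symm⟩

variable {f : ℝ → E} {hf : ContDiff ℝ 1 f} {t : ℝ}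

lemma evC_ofContDiff (ht : t ∈ Icc0 r) : evC (ofContDiff r f hf) t = f t := by
  simp [evC, ofContDiff, extFun, ht]

lemma dvC_ofContDiff (ht : t ∈ Icc0 r) : dvC (ofContDiff r f hf) t = deriv f t := by
  simp [dvC, ofContDiff, extFun, ht]

variable (r) in
def evalₗ (t : ℝ) : C1 r E →ₗ[ℝ] E where
  toFun φ := evC φ t
  map_add' φ ψ := by simp [evC, extFun_add]
  map_smul' c φ := by simp [evC, extFun_smul]

variable (r) in
def derivEvalₗ (t : ℝ) : C1 r E →ₗ[ℝ] E where
  toFun φ := dvC φ t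
  map_add' φ ψ := by simp [dvC, extFun_add]
  map_smul' c φ := by simp [dvC, extFun_smul]

variable (r E) in
def vanishingOn (s : Set ℝ) : Submodule ℝ (C1 r E) := ⨅ t ∈ s, LinearMap.ker (evalₗ r t)

lemma mem_vanishingOn {s : Set ℝ} {φ : C1 r E} :
    φ ∈ vanishingOn r E s ↔ ∀ t ∈ s, evC φ t = 0 := by
  simp only [vanishingOn, Submodule.mem_iInf, LinearMap.mem_ker]
  rfl

lemma vanishingOn_anti {s s' : Set ℝ} (h : s ⊆ s') : vanishingOn r E s' ≤ vanishingOn r E s :=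
  biInf_mono h

end C1

lemma ContDiffBump.abs_mul_self_le_rOut (b : ContDiffBump (0 : ℝ)) (t : ℝ) :
    |t * b t| ≤ b.rOut := by
  rcases lt_or_ge |t| b.rOut with ht | ht
  · calc |t * b t| = |t| * b t := by rw [abs_mul, abs_of_nonneg b.nonneg]
      _ ≤ |t| * 1 := by gcongr; exact b.le_one
      _ ≤ b.rOut := by linarith
  · rw [b.zero_of_le_dist (by rwa [Real.dist_0_eq_abs]), mul_zero, abs_zero]
    exact b.rOut_pos.le

lemma exists_C1_deriv_one_vanishing_norm_le {r : ℝ} (hr : 0 ≤ r) {δ : ℝ} (hδ : 0 < δ) :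
    ∃ φ ∈ C1.vanishingOn r ℝ (Icc (-r) (-δ) ∪ {0}), dvC φ 0 = 1 ∧ ‖φ.1.1‖ ≤ δ := by
  let b : ContDiffBump (0 : ℝ) := ⟨δ / 2, δ, by positivity, by linarith⟩
  have hb : ContDiff ℝ 1 fun t => t * b t := contDiff_id.mul b.contDiff
  have hb0 : b 0 = 1 := b.one_of_mem_closedBall (Metric.mem_closedBall_self b.rIn_pos.le)
  have h0 : (0 : ℝ) ∈ Icc0 r := ⟨neg_nonpos.2 hr, le_rfl⟩
  refine ⟨C1.ofContDiff r _ hb, C1.mem_vanishingOn.2 ?_, ?_, ?_⟩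
  · rintro t (⟨htr, htδ⟩ | rfl)
    · rw [C1.evC_ofContDiff ⟨htr, by linarith⟩, b.zero_of_le_dist, mul_zero]
      rw [Real.dist_0_eq_abs, abs_of_neg (by linarith)]
      linarith
    · rw [C1.evC_ofContDiff h0, zero_mul]
  · rw [C1.dvC_ofContDiff h0]
    simpa [hb0] using
      ((hasDerivAt_id (0 : ℝ)).fun_mul (b.contDiff.differentiable one_ne_zero 0).hasDerivAt).deriv
  · exact (ContinuousMap.norm_le _ hδ.le).2 fun t => b.abs_mul_self_le_rOut t

lemma exists_C1_deriv_one_vanishing_norm_apply_lt {r z : ℝ} (hz : z ∈ Ico (-r) 0) {q : ℕ}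
    (lam : C(Icc0 r, ℝ) →L[ℝ] (Fin q → ℝ)) {ε : ℝ} (hε : 0 < ε) :
    ∃ φ ∈ C1.vanishingOn r ℝ (Icc (-r) z ∪ {0}), dvC φ 0 = 1 ∧ ‖lam φ.1.1‖ < ε := by
  set δ := min (-z) (ε / (‖lam‖ + 1))
  have hδ : 0 < δ := lt_min (neg_pos.2 hz.2) (by positivity)
  obtain ⟨φ, hφ, hφ', hnorm⟩ :=
    exists_C1_deriv_one_vanishing_norm_le (by linarith [hz.1, hz.2] : 0 ≤ r) hδ
  have hsub : Icc (-r) z ∪ {0} ⊆ Icc (-r) (-δ) ∪ {0} :=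
    union_subset_union_left _ (Icc_subset_Icc_right (le_neg.1 (min_le_left _ _)))
  refine ⟨φ, C1.vanishingOn_anti hsub hφ, hφ', ?_⟩
  calc ‖lam φ.1.1‖ ≤ ‖lam‖ * δ := (lam.le_opNorm _).trans (by gcongr)
    _ ≤ ‖lam‖ * (ε / (‖lam‖ + 1)) := by gcongr; exact min_le_right _ _
    _ < ε := by
      rw [mul_div_assoc', div_lt_iff₀ (by positivity)]
      nlinarith [norm_nonneg lam]

theorem statement1_general {r : ℝ} {q : ℕ}
    (lam : C(Icc0 r, ℝ) →L[ℝ] (Fin q → ℝ)) (z : ℝ) (hz : z ∈ Set.Ico (-r) 0) :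
    ∃ φ : C1 r ℝ, dvC φ 0 = 1 ∧ lam φ.1.1 = 0 ∧
      (∀ t ∈ Set.Icc (-r) z, evC φ t = 0) ∧ evC φ 0 = 0 := by
  let T : C1 r ℝ →ₗ[ℝ] (Fin q → ℝ) × ℝ :=
    (lam.toLinearMap ∘ₗ LinearMap.fst ℝ _ _ ∘ₗ (C1sub r ℝ).subtype).prod (C1.derivEvalₗ r 0)
  let Z := C1.vanishingOn r ℝ (Icc (-r) z ∪ {0})
  have happrox : ((0 : Fin q → ℝ), (1 : ℝ)) ∈ closure (Z.map T : Set ((Fin q → ℝ) × ℝ)) := by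
    refine Metric.mem_closure_iff.2 fun ε hε => ?_
    obtain ⟨φ, hφZ, hφ', hφε⟩ := exists_C1_deriv_one_vanishing_norm_apply_lt hz lam hε
    have hTφ : T φ = (lam φ.1.1, 1) := Prod.ext rfl hφ'
    refine ⟨T φ, ⟨φ, hφZ, rfl⟩, ?_⟩
    rw [hTφ, Prod.dist_eq, dist_zero_left, dist_self]
    exact max_lt hφε hε
  obtain ⟨φ, hφZ, hTφ⟩ := (Submodule.closed_of_finiteDimensional (Z.map T)).closure_subset happrox
  have hvan := C1.mem_vanishingOn.1 hφZ
  exact ⟨φ, congrArg Prod.snd hTφ, congrArg Prod.fst hTφ, fun t ht => hvan t (.inl ht),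
    hvan 0 (.inr rfl)⟩

/-- Lemma 2.2: given a continuous linear map `λ : C → ℝ^q` and `z ∈ [-r,0)` there is
`φ ∈ C¹` with `φ'(0) = 1`, `λφ = 0` and `φ(t) = 0` on `[-r,z] ∪ {0}`. -/
theorem statement1 {r : ℝ} (hr : 0 < r) {q : ℕ}
    (lam : C(Icc0 r, ℝ) →L[ℝ] (Fin q → ℝ)) (z : ℝ) (hz : z ∈ Set.Ico (-r) 0) :
    ∃ φ : C1 r ℝ, dvC φ 0 = 1 ∧ lam φ.1.1 = 0 ∧
      (∀ t ∈ Set.Icc (-r) z, evC φ t = 0) ∧ evC φ 0 = 0 :=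
  statement1_general lam z hz
end
end

section
/- The restriction of R^K to X_{fK} is injective, and for every φ∈X_{fK} the map R^K defines a (topological) isomorphism from the tangent space T_φX_f onto X_0. -/
set_option linter.unusedSectionVars false

open Set

noncomputable section

/-!
At a point `φ ∈ X_{fK}` every delay vanishes at `Lφ`. As `d_k ≥ 0`, this is a minimum, so
`Dd_k(Lφ) = 0`, and `φ̂ = (φ(0), …, φ(0))`. Hence `φ` is recovered from `R^K φ`, which keeps `φ(0)`,
since `φ'(0) = g(φ(0), …, φ(0))`.

The tangent space is `T_φX_f = {χ | χ'(0) = A χ(0)}` with `A x = Dg(φ̂)(x, …, x)`. Along a curve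
`c` in `X_f` through `φ` the evaluation points `-d_k(L c(s))` have zero velocity at `s = 0`, so
differentiating `c(s)'(0) = g(ĉ(s))` gives `⊆`. Conversely, the line `φ + sχ` is corrected to
`φ + sχ + Y·u(s)` with `u` from the implicit function theorem; the correction does not change `L`
because `L(ψ_ν e_ν) = 0`. On this subspace `R^K` is inverted by the continuous map
`η ↦ η + Y·A η(0)`.
-/

open Filter Asymptotics Topology

section C1

variable {r : ℝ} {E : Type*} [NormedAddCommGroup E] [NormedSpace ℝ E]

/-- `C1 r E` would otherwise get `Submodule.module`, which the unifier cannot match with the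
`NormedSpace.toModule _` expected by the calculus lemmas, so compositions of derivatives of
`C1`-valued maps fail to elaborate. -/
instance instModuleC1 : Module ℝ (C1 r E) := NormedSpace.toModule

lemma norm_evC_le (φ : C1 r E) (t : ℝ) : ‖evC φ t‖ ≤ ‖φ‖ := by
  by_cases h : t ∈ Icc0 r
  · rw [evC, extFun, dif_pos h]
    exact (φ.1.1.norm_coe_le_norm _).trans (norm_fst_le φ.1)
  · simp [evC, extFun, h]

lemma norm_dvC_le (φ : C1 r E) (t : ℝ) : ‖dvC φ t‖ ≤ ‖φ‖ := by
  by_cases h : t ∈ Icc0 r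
  · rw [dvC, extFun, dif_pos h]
    exact (φ.1.2.norm_coe_le_norm _).trans (norm_snd_le φ.1)
  · simp [dvC, extFun, h]

variable (r E) in
def evalCLM (t : ℝ) : C1 r E →L[ℝ] E :=
  LinearMap.mkContinuous
    { toFun := fun φ => evC φ t
      map_add' := fun φ ψ => congrFun (extFun_add φ.1.1 ψ.1.1) t
      map_smul' := fun c φ => congrFun (extFun_smul c φ.1.1) t }
    1 fun φ => (norm_evC_le φ t).trans_eq (one_mul _).symm

variable (r E) in
def derivCLM (t : ℝ) : C1 r E →L[ℝ] E :=
  LinearMap.mkContinuous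
    { toFun := fun φ => dvC φ t
      map_add' := fun φ ψ => congrFun (extFun_add φ.1.2 ψ.1.2) t
      map_smul' := fun c φ => congrFun (extFun_smul c φ.1.2) t }
    1 fun φ => (norm_dvC_le φ t).trans_eq (one_mul _).symm

@[simp] lemma evalCLM_apply (t : ℝ) (φ : C1 r E) : evalCLM r E t φ = evC φ t := rfl

@[simp] lemma derivCLM_apply (t : ℝ) (φ : C1 r E) : derivCLM r E t φ = dvC φ t := rfl

@[simp] lemma evC_add (φ ψ : C1 r E) (t : ℝ) : evC (φ + ψ) t = evC φ t + evC ψ t :=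
  map_add (evalCLM r E t) φ ψ

@[simp] lemma evC_sub (φ ψ : C1 r E) (t : ℝ) : evC (φ - ψ) t = evC φ t - evC ψ t :=
  map_sub (evalCLM r E t) φ ψ

@[simp] lemma evC_smul (c : ℝ) (φ : C1 r E) (t : ℝ) : evC (c • φ) t = c • evC φ t :=
  map_smul (evalCLM r E t) c φ

@[simp] lemma dvC_add (φ ψ : C1 r E) (t : ℝ) : dvC (φ + ψ) t = dvC φ t + dvC ψ t :=
  map_add (derivCLM r E t) φ ψ

@[simp] lemma dvC_sub (φ ψ : C1 r E) (t : ℝ) : dvC (φ - ψ) t = dvC φ t - dvC ψ t :=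
  map_sub (derivCLM r E t) φ ψ

lemma norm_evC_sub_evC_le (φ : C1 r E) {a b : ℝ} (ha : a ∈ Icc0 r) (hb : b ∈ Icc0 r) :
    ‖evC φ a - evC φ b‖ ≤ ‖φ‖ * |a - b| := by
  simpa only [Real.norm_eq_abs] using
    (convex_Icc (-r) 0).norm_image_sub_le_of_norm_hasDerivWithin_le
      (f := evC φ) (fun x hx => φ.2 x hx) (fun x _ => norm_dvC_le φ x) hb ha

lemma continuousOn_extFun (f : C(Icc0 r, E)) : ContinuousOn (extFun f) (Icc0 r) := by
  rw [continuousOn_iff_continuous_domRestrict]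
  convert f.continuous using 1
  funext x
  exact dif_pos x.2

end C1

section C1Deriv

variable {r : ℝ} {E : Type*} [NormedAddCommGroup E] [NormedSpace ℝ E]
  {G : Type*} [NormedAddCommGroup G] [NormedSpace ℝ G]

/-- Moving the evaluation point from `0` to `-τ x` costs only `O(‖c x‖ τ x) = o(x - x₀)`, by the
Lipschitz bound on `c x`. -/
theorem HasFDerivAt.evC_neg_comp {c : G → C1 r E} {c' : G →L[ℝ] C1 r E} {τ : G → ℝ} {x₀ : G}
    (hc : HasFDerivAt c c' x₀) (hτ : ∀ᶠ x in 𝓝 x₀, τ x ∈ Icc 0 r) (hτ₀ : τ x₀ = 0)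
    (hτ' : HasFDerivAt τ (0 : G →L[ℝ] ℝ) x₀) :
    HasFDerivAt (fun x => evC (c x) (-τ x)) ((evalCLM r E 0).comp c') x₀ := by
  obtain ⟨hτ0, hτr⟩ := hτ.self_of_nhds
  have h0r : (0 : ℝ) ∈ Icc0 r := ⟨neg_nonpos.2 (hτ0.trans hτr), le_rfl⟩
  have hshift : HasFDerivAt (fun x => evC (c x) (-τ x) - evC (c x) 0) (0 : G →L[ℝ] E) x₀ := by
    refine .of_isLittleO ?_
    have hτo : τ =o[𝓝 x₀] fun x => x - x₀ := by simpa [hτ₀] using hτ'.isLittleO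
    suffices h : (fun x => evC (c x) (-τ x) - evC (c x) 0) =O[𝓝 x₀] τ by
      simpa [hτ₀] using h.trans_isLittleO hτo
    have hbdd : ∀ᶠ x in 𝓝 x₀, ‖c x‖ < ‖c x₀‖ + 1 :=
      hc.continuousAt.norm.eventually (gt_mem_nhds (lt_add_one _))
    refine isBigO_iff.2 ⟨‖c x₀‖ + 1, ?_⟩
    filter_upwards [hτ, hbdd] with x hx hcx
    calc ‖evC (c x) (-τ x) - evC (c x) 0‖ ≤ ‖c x‖ * |-τ x - 0| :=
          norm_evC_sub_evC_le _ ⟨neg_le_neg hx.2, neg_nonpos.2 hx.1⟩ h0r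
      _ ≤ (‖c x₀‖ + 1) * ‖τ x‖ := by
          rw [sub_zero, abs_neg, ← Real.norm_eq_abs]
          exact mul_le_mul_of_nonneg_right hcx.le (norm_nonneg _)
  simpa using ((evalCLM r E 0).hasFDerivAt.comp x₀ hc).fun_add hshift

theorem contDiffOn_evC_neg_comp (ζ : C1 r E) {τ : ℝ → ℝ} {O : Set ℝ} (hO : IsOpen O)
    (hτ : ContDiffOn ℝ 1 τ O) (hτO : ∀ s ∈ O, τ s ∈ Ico 0 r) :
    ContDiffOn ℝ 1 (fun s => evC ζ (-τ s)) O := by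
  have hderiv : ∀ s ∈ O, HasDerivAt (fun s => evC ζ (-τ s)) (-deriv τ s • dvC ζ (-τ s)) s := by
    intro s hs
    have hτs : HasDerivAt τ (deriv τ s) s :=
      ((hτ.contDiffAt (hO.mem_nhds hs)).differentiableAt one_ne_zero).hasDerivAt
    rcases (hτO s hs).1.eq_or_lt with h0 | hpos
    · have hmin : IsLocalMin τ s :=
        eventually_of_mem (hO.mem_nhds hs) fun x hx => h0 ▸ (hτO x hx).1
      rw [hmin.deriv_eq_zero] at hτs ⊢
      have h := (hasFDerivAt_const ζ s).evC_neg_comp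
        (eventually_of_mem (hO.mem_nhds hs) fun x hx => Ico_subset_Icc_self (hτO x hx))
        h0.symm (by simpa using hτs.hasFDerivAt)
      simpa using h.hasDerivAt
    · have hmem : -τ s ∈ Ioo (-r) 0 := ⟨neg_lt_neg (hτO s hs).2, neg_neg_of_pos hpos⟩
      have hζ : HasDerivAt (evC ζ) (dvC ζ (-τ s)) (-τ s) :=
        (ζ.2 _ (Ioo_subset_Icc_self hmem)).hasDerivAt (Icc_mem_nhds hmem.1 hmem.2)
      exact hζ.scomp s hτs.neg
  rw [show (1 : WithTop ℕ∞) = 0 + 1 from rfl, contDiffOn_succ_iff_deriv_of_isOpen hO]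
  refine ⟨fun s hs => (hderiv s hs).differentiableAt.differentiableWithinAt, by simp, ?_⟩
  rw [contDiffOn_zero]
  refine ContinuousOn.congr ?_ fun s hs => (hderiv s hs).deriv
  exact (hτ.continuousOn_deriv_of_isOpen hO le_rfl).neg.smul
    ((continuousOn_extFun ζ.1.2).comp hτ.continuousOn.neg
      fun s hs => ⟨neg_le_neg (hτO s hs).2.le, neg_nonpos.2 (hτO s hs).1⟩)

theorem contDiffAt_evC_neg_comp (ζ : C1 r E) {τ : ℝ → ℝ} {O : Set ℝ} (hO : IsOpen O)
    (hτ : ContDiffOn ℝ 1 τ O) (hτO : ∀ s ∈ O, τ s ∈ Icc 0 r) {s₀ : ℝ} (hs₀ : s₀ ∈ O)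
    (hlt : τ s₀ < r) : ContDiffAt ℝ 1 (fun s => evC ζ (-τ s)) s₀ := by
  have hO' : IsOpen (O ∩ τ ⁻¹' Iio r) := hτ.continuousOn.isOpen_inter_preimage hO isOpen_Iio
  exact (contDiffOn_evC_neg_comp ζ hO' (hτ.mono inter_subset_left)
    fun s hs => ⟨(hτO s hs.1).1, hs.2⟩).contDiffAt (hO'.mem_nhds ⟨hs₀, hlt⟩)

end C1Deriv

section Curves

variable {E : Type*} [NormedAddCommGroup E] [NormedSpace ℝ E]

theorem mem_tangentSet_of_eventually {X : Set E} {c : ℝ → E} {v : E}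
    (hc : ContDiffAt ℝ 1 c 0) (hv : HasDerivAt c v 0) (hX : ∀ᶠ s in 𝓝 0, c s ∈ X) :
    v ∈ tangentSet X (c 0) := by
  obtain ⟨O, hO, hcO⟩ := hc.contDiffOn le_rfl (by simp)
  obtain ⟨ε, hε, hball⟩ := Metric.eventually_nhds_iff_ball.1 (hX.and hO)
  have hIoo : Ioo (-ε) ε = Metric.ball 0 ε := by simp [Real.ball_eq_Ioo]
  exact ⟨c, ε, hε, hcO.mono fun s hs => (hball s (hIoo ▸ hs)).2,
    fun s hs => (hball s (hIoo ▸ hs)).1, rfl, hv.hasDerivWithinAt⟩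

theorem exists_implicit_curve [CompleteSpace E] {Φ : ℝ × E → E} (hΦ : ContDiffAt ℝ 1 Φ (0, 0))
    (hΦ' : HasFDerivAt Φ (ContinuousLinearMap.snd ℝ ℝ E) (0, 0)) :
    ∃ u : ℝ → E, u 0 = 0 ∧ ContDiffAt ℝ 1 u 0 ∧ HasDerivAt u 0 0 ∧
      ∀ᶠ s in 𝓝 0, Φ (s, u s) = Φ (0, 0) := by
  have hinv : (fderiv ℝ Φ (0, 0) ∘L .inr ℝ ℝ E).IsInvertible := by
    rw [hΦ'.fderiv]
    exact ⟨ContinuousLinearEquiv.refl ℝ E, rfl⟩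
  refine ⟨hΦ.implicitFunction one_ne_zero hinv, hΦ.implicitFunction_apply_self one_ne_zero hinv,
    hΦ.contDiffAt_implicitFunction one_ne_zero hinv, ?_,
    hΦ.eventually_apply_implicitFunction one_ne_zero hinv⟩
  have h := (hΦ.hasStrictFDerivAt_implicitFunction one_ne_zero hinv).hasFDerivAt.hasDerivAt
  rw [hΦ'.fderiv] at h
  simpa using h

end Curves

section Ymap

variable {r : ℝ} {n : ℕ} {ψ : Fin n → C1 r ℝ}

lemma sCLM_apply (ν : Fin n) (a : ℝ) : sCLM n ν a = Pi.single ν a := by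
  ext μ
  by_cases h : μ = ν <;> simp [sCLM, h]

lemma evC_Ymap (x : Fin n → ℝ) (t : ℝ) : evC (Ymap ψ x) t = fun μ => x μ * evC (ψ μ) t := by
  ext μ
  change evalCLM r _ t (∑ ν, x ν • singleC1 ν (ψ ν)) μ = _
  simp [evC, singleC1, extFun_CMsingle, sCLM_apply, Pi.single_apply]

lemma dvC_Ymap (x : Fin n → ℝ) (t : ℝ) : dvC (Ymap ψ x) t = fun μ => x μ * dvC (ψ μ) t := by
  ext μ
  change derivCLM r _ t (∑ ν, x ν • singleC1 ν (ψ ν)) μ = _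
  simp [dvC, singleC1, extFun_CMsingle, sCLM_apply, Pi.single_apply]

lemma evC_Ymap_zero (hψ0 : ∀ ν, evC (ψ ν) 0 = 0) (x : Fin n → ℝ) : evC (Ymap ψ x) 0 = 0 := by
  ext μ
  simp [evC_Ymap, hψ0]

lemma dvC_Ymap_zero (hψ1 : ∀ ν, dvC (ψ ν) 0 = 1) (x : Fin n → ℝ) : dvC (Ymap ψ x) 0 = x := by
  simp [dvC_Ymap, hψ1]

variable (ψ) in
def YCLM : (Fin n → ℝ) →L[ℝ] C1 r (Fin n → ℝ) := (Ymap ψ).toContinuousLinearMap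

@[simp] lemma YCLM_apply (x : Fin n → ℝ) : YCLM ψ x = Ymap ψ x := rfl

variable (ψ) in
def affineFamily (φ χ : C1 r (Fin n → ℝ)) (p : ℝ × (Fin n → ℝ)) : C1 r (Fin n → ℝ) :=
  φ + p.1 • χ + Ymap ψ p.2

@[simp] lemma affineFamily_zero (φ χ : C1 r (Fin n → ℝ)) : affineFamily ψ φ χ (0, 0) = φ := by
  simp [affineFamily]

variable (ψ) in
lemma hasFDerivAt_affineFamily (φ χ : C1 r (Fin n → ℝ)) (p : ℝ × (Fin n → ℝ)) :
    HasFDerivAt (affineFamily ψ φ χ)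
      ((ContinuousLinearMap.fst ℝ ℝ _).smulRight χ + (YCLM ψ).comp (ContinuousLinearMap.snd ℝ ℝ _))
      p :=
  ((hasFDerivAt_fst.smul_const χ).const_add φ).add ((YCLM ψ).hasFDerivAt.comp p hasFDerivAt_snd)

variable (ψ) in
lemma contDiff_affineFamily (φ χ : C1 r (Fin n → ℝ)) : ContDiff ℝ 1 (affineFamily ψ φ χ) :=
  (contDiff_const.add (contDiff_fst.smul contDiff_const)).add ((YCLM ψ).contDiff.comp contDiff_snd)

end Ymap

section RKmap

variable {r : ℝ} {n : ℕ} {ψ : Fin n → C1 r ℝ}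

lemma evC_RKmap_zero (hψ0 : ∀ ν, evC (ψ ν) 0 = 0) (φ : C1 r (Fin n → ℝ)) :
    evC (RKmap ψ φ) 0 = evC φ 0 := by
  simp [RKmap, evC_Ymap_zero hψ0]

lemma RKmap_mem_X0sub (hψ1 : ∀ ν, dvC (ψ ν) 0 = 1) (φ : C1 r (Fin n → ℝ)) :
    RKmap ψ φ ∈ X0sub r n := by
  simp [X0sub, RKmap, dvC_Ymap_zero hψ1]

lemma RKmap_add_Ymap (φ : C1 r (Fin n → ℝ)) : RKmap ψ φ + Ymap ψ (dvC φ 0) = φ :=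
  sub_add_cancel φ _

variable (ψ) in
/-- The inverse of `R^K` on the subspace `{χ | χ'(0) = A χ(0)}`. -/
def RKmapInv (A : (Fin n → ℝ) → Fin n → ℝ) (η : C1 r (Fin n → ℝ)) : C1 r (Fin n → ℝ) :=
  η + Ymap ψ (A (evC η 0))

theorem continuous_RKmapInv {A : (Fin n → ℝ) → Fin n → ℝ} (hA : Continuous A) :
    Continuous (RKmapInv ψ A) :=
  continuous_id.add <| (YCLM ψ).continuous.comp <| hA.comp (evalCLM r _ 0).continuous

theorem invOn_RKmapInv (hψ0 : ∀ ν, evC (ψ ν) 0 = 0) (hψ1 : ∀ ν, dvC (ψ ν) 0 = 1)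
    (A : (Fin n → ℝ) → Fin n → ℝ) :
    InvOn (RKmapInv ψ A) (RKmap ψ) {χ | dvC χ 0 = A (evC χ 0)} (X0sub r n) := by
  constructor
  · intro χ hχ
    simp only [RKmapInv, evC_RKmap_zero hψ0, ← mem_ofPred_eq.mp hχ]
    exact RKmap_add_Ymap χ
  · intro η hη
    simp only [RKmap, RKmapInv, dvC_add, dvC_Ymap_zero hψ1]
    rw [show dvC η 0 = 0 from hη, zero_add, add_sub_cancel_right]

theorem bijOn_RKmap (hψ0 : ∀ ν, evC (ψ ν) 0 = 0) (hψ1 : ∀ ν, dvC (ψ ν) 0 = 1)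
    (A : (Fin n → ℝ) → Fin n → ℝ) :
    BijOn (RKmap ψ) {χ | dvC χ 0 = A (evC χ 0)} (X0sub r n) := by
  refine (invOn_RKmapInv hψ0 hψ1 A).bijOn (fun χ _ => RKmap_mem_X0sub hψ1 χ) fun η hη => ?_
  simp only [mem_ofPred_eq, RKmapInv, dvC_add, evC_add, dvC_Ymap_zero hψ1, evC_Ymap_zero hψ0]
  rw [show dvC η 0 = 0 from hη, zero_add, add_zero]

end RKmap

namespace Setting

variable {r : ℝ} {n kk : ℕ} {F : Type*} [NormedAddCommGroup F] [NormedSpace ℝ F]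
  (S : Setting r n kk F) {ψ : Fin n → C1 r ℝ}

def LofCLM : C1 r (Fin n → ℝ) →L[ℝ] F :=
  S.L.comp ((ContinuousLinearMap.fst ℝ _ _).comp (C1sub r _).subtypeL)

@[simp] lemma LofCLM_apply (φ : C1 r (Fin n → ℝ)) : S.LofCLM φ = S.Lof φ := rfl

lemma Lof_Ymap (hψL : ∀ ν, S.L (singleC1 ν (ψ ν)).1.1 = 0) (x : Fin n → ℝ) :
    S.Lof (Ymap ψ x) = 0 := by
  change S.LofCLM (∑ ν, x ν • singleC1 ν (ψ ν)) = 0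
  simp [Setting.Lof, hψL]

lemma Lof_affineFamily (hψL : ∀ ν, S.L (singleC1 ν (ψ ν)).1.1 = 0) (φ χ : C1 r (Fin n → ℝ))
    (p : ℝ × (Fin n → ℝ)) : S.Lof (affineFamily ψ φ χ p) = S.Lof φ + p.1 • S.Lof χ := by
  change S.LofCLM (φ + p.1 • χ + Ymap ψ p.2) = S.LofCLM φ + p.1 • S.LofCLM χ
  rw [map_add, map_add, map_smul, LofCLM_apply S (Ymap ψ p.2), S.Lof_Ymap hψL, add_zero]

lemma hat_eq_const {φ : C1 r (Fin n → ℝ)} (hd : ∀ k, S.d k (S.Lof φ) = 0) :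
    S.hat φ = fun _ => evC φ 0 := by
  ext k : 1
  simp [Setting.hat, hd k]

lemma d_eq_zero_of_mem_XfJ {φ : C1 r (Fin n → ℝ)} (hφ : φ ∈ S.XfJ Finset.univ) (k : Fin kk) :
    S.d k (S.Lof φ) = 0 :=
  hφ.2.2.2.1 k (Finset.mem_univ k)

lemma hasFDerivAt_d_of_eq_zero {k : Fin kk} {w : F} (hw : w ∈ S.W) (hd : S.d k w = 0) :
    HasFDerivAt (S.d k) (0 : F →L[ℝ] ℝ) w := by
  have hdiff := ((S.d_smooth k).contDiffAt (S.Wopen.mem_nhds hw)).differentiableAt one_ne_zero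
  have hmin : IsLocalMin (S.d k) w :=
    eventually_of_mem (S.Wopen.mem_nhds hw) fun v hv => hd ▸ (S.d_mem k v hv).1
  exact hmin.hasFDerivAt_eq_zero hdiff.hasFDerivAt ▸ hdiff.hasFDerivAt

theorem hasFDerivAt_hat_comp {G : Type*} [NormedAddCommGroup G] [NormedSpace ℝ G]
    {c : G → C1 r (Fin n → ℝ)} {c' : G →L[ℝ] C1 r (Fin n → ℝ)} {x₀ : G}
    (hc : HasFDerivAt c c' x₀) (hW : S.Lof (c x₀) ∈ S.W) (hd : ∀ k, S.d k (S.Lof (c x₀)) = 0) :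
    HasFDerivAt (fun x => S.hat (c x))
      (ContinuousLinearMap.pi fun _ => (evalCLM r _ 0).comp c') x₀ := by
  refine hasFDerivAt_pi.2 fun k => ?_
  have hL : HasFDerivAt (fun x => S.Lof (c x)) (S.LofCLM.comp c') x₀ :=
    S.LofCLM.hasFDerivAt.comp x₀ hc
  have hτ : HasFDerivAt (fun x => S.d k (S.Lof (c x))) ((0 : F →L[ℝ] ℝ).comp (S.LofCLM.comp c'))
      x₀ := (S.hasFDerivAt_d_of_eq_zero hW (hd k)).comp x₀ hL
  rw [ContinuousLinearMap.zero_comp] at hτ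
  have hWev : ∀ᶠ x in 𝓝 x₀, S.Lof (c x) ∈ S.W :=
    hL.continuousAt.preimage_mem_nhds (S.Wopen.mem_nhds hW)
  exact hc.evC_neg_comp (hWev.mono fun x hx => S.d_mem k _ hx) (hd k) hτ

theorem dvC_eq_of_mem_tangentSet {φ : C1 r (Fin n → ℝ)} (hφ : φ ∈ S.Xf)
    (hd : ∀ k, S.d k (S.Lof φ) = 0) {v : C1 r (Fin n → ℝ)} (hv : v ∈ tangentSet S.Xf φ) :
    dvC v 0 = fderiv ℝ S.g (S.hat φ) (fun _ => evC v 0) := by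
  obtain ⟨c, ε, hε, -, hcX, rfl, hcv⟩ := hv
  have hIoo : Ioo (-ε) ε ∈ 𝓝 (0 : ℝ) := Ioo_mem_nhds (neg_neg_of_pos hε) hε
  have hc := (hcv.hasDerivAt hIoo).hasFDerivAt
  have hg : HasFDerivAt S.g (fderiv ℝ S.g (S.hat (c 0))) (S.hat (c 0)) :=
    ((S.g_smooth.contDiffAt (S.Vopen.mem_nhds hφ.1.2)).differentiableAt one_ne_zero).hasFDerivAt
  have hrhs := (hg.comp 0 (S.hasFDerivAt_hat_comp hc hφ.1.1 hd)).hasDerivAt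
  have hlhs := ((derivCLM r _ 0).hasFDerivAt.comp 0 hc).hasDerivAt
  have heq : (fun s => dvC (c s) 0) =ᶠ[𝓝 0] fun s => S.g (S.hat (c s)) :=
    eventually_of_mem hIoo fun s hs => (hcX s hs).2
  simpa using hlhs.unique (hrhs.congr_of_eventuallyEq heq)

theorem contDiffAt_hat_affineFamily (hψL : ∀ ν, S.L (singleC1 ν (ψ ν)).1.1 = 0)
    {φ χ : C1 r (Fin n → ℝ)} (hW : S.Lof φ ∈ S.W) (hd : ∀ k, S.d k (S.Lof φ) < r) :
    ContDiffAt ℝ 1 (fun p => S.hat (affineFamily ψ φ χ p)) (0, 0) := by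
  set ℓ : ℝ → F := fun s => S.Lof φ + s • S.Lof χ
  have hℓ : ContDiff ℝ 1 ℓ := contDiff_const.add (contDiff_id.smul contDiff_const)
  have hO : IsOpen (ℓ ⁻¹' S.W) := S.Wopen.preimage hℓ.continuous
  have h0 : (0 : ℝ) ∈ ℓ ⁻¹' S.W := by simpa [ℓ] using hW
  have hτ : ∀ k, ContDiffOn ℝ 1 (fun s => S.d k (ℓ s)) (ℓ ⁻¹' S.W) :=
    fun k => (S.d_smooth k).comp hℓ.contDiffOn fun _ hs => hs
  have hτ0 : ∀ k, S.d k (ℓ 0) < r := by simpa [ℓ] using hd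
  have hev : ∀ (ζ : C1 r (Fin n → ℝ)) k,
      ContDiffAt ℝ 1 (fun p : ℝ × (Fin n → ℝ) => evC ζ (-S.d k (ℓ p.1))) (0, 0) :=
    fun ζ k => ContDiffAt.comp (f := Prod.fst) (0, 0) (contDiffAt_evC_neg_comp ζ hO (hτ k)
      (fun s hs => S.d_mem k _ hs) h0 (hτ0 k)) contDiffAt_fst
  have hψev : ∀ k μ,
      ContDiffAt ℝ 1 (fun p : ℝ × (Fin n → ℝ) => evC (ψ μ) (-S.d k (ℓ p.1))) (0, 0) :=
    fun k μ => ContDiffAt.comp (f := Prod.fst) (0, 0) (contDiffAt_evC_neg_comp (ψ μ) hO (hτ k)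
      (fun s hs => S.d_mem k _ hs) h0 (hτ0 k)) contDiffAt_fst
  refine contDiffAt_pi.2 fun k => ?_
  simp only [Setting.hat, S.Lof_affineFamily hψL]
  simp only [affineFamily, evC_add, evC_smul, evC_Ymap]
  refine ((hev φ k).add (contDiffAt_fst.smul (hev χ k))).add (contDiffAt_pi.2 fun μ => ?_)
  exact ((contDiff_apply ℝ ℝ μ).contDiffAt.comp _ contDiffAt_snd).mul (hψev k μ)

/-- The correction `u` solves `φ'(0) + s χ'(0) + u = g(ĉ(s, u))`; the hypothesis on `χ` is
exactly the vanishing of the `s`-derivative of this equation at `(0, 0)`. -/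
theorem exists_solution_curve (hr : 0 < r) (hψL : ∀ ν, S.L (singleC1 ν (ψ ν)).1.1 = 0)
    (hψ0 : ∀ ν, evC (ψ ν) 0 = 0) (hψ1 : ∀ ν, dvC (ψ ν) 0 = 1)
    {φ : C1 r (Fin n → ℝ)} (hφ : φ ∈ S.Xf) (hd : ∀ k, S.d k (S.Lof φ) = 0)
    {χ : C1 r (Fin n → ℝ)} (hχ : dvC χ 0 = fderiv ℝ S.g (S.hat φ) (fun _ => evC χ 0)) :
    ∃ u : ℝ → Fin n → ℝ, u 0 = 0 ∧ ContDiffAt ℝ 1 u 0 ∧ HasDerivAt u 0 0 ∧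
      ∀ᶠ s in 𝓝 0, dvC (affineFamily ψ φ χ (s, u s)) 0 =
        S.g (S.hat (affineFamily ψ φ χ (s, u s))) := by
  set H := fun p => S.hat (affineFamily ψ φ χ p)
  have hH := S.hasFDerivAt_hat_comp (hasFDerivAt_affineFamily ψ φ χ (0, 0))
    (by simpa using hφ.1.1) (by simpa using hd)
  have hHC : ContDiffAt ℝ 1 H (0, 0) :=
    S.contDiffAt_hat_affineFamily hψL hφ.1.1 fun k => (hd k).trans_lt hr
  have hg : ContDiffAt ℝ 1 S.g (H (0, 0)) :=
    S.g_smooth.contDiffAt (S.Vopen.mem_nhds (by simpa [H] using hφ.1.2))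
  set Φ := fun p => dvC (affineFamily ψ φ χ p) 0 - S.g (H p)
  have hΦC : ContDiffAt ℝ 1 Φ (0, 0) :=
    ((derivCLM r (Fin n → ℝ) 0).contDiff.comp (contDiff_affineFamily ψ φ χ)).contDiffAt.sub
      (hg.comp _ hHC)
  have hΦ' : HasFDerivAt Φ (ContinuousLinearMap.snd ℝ ℝ (Fin n → ℝ)) (0, 0) := by
    have h := ((derivCLM r (Fin n → ℝ) 0).hasFDerivAt.comp _
      (hasFDerivAt_affineFamily ψ φ χ (0, 0))).sub
      ((hg.differentiableAt one_ne_zero).hasFDerivAt.comp _ hH)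
    refine h.congr_fderiv (ContinuousLinearMap.ext fun p => ?_)
    have hconst : (fun _ : Fin kk => p.1 • evC χ 0) = p.1 • fun _ => evC χ 0 := rfl
    simp [H, dvC_Ymap_zero hψ1, evC_Ymap_zero hψ0, hconst, ← hχ]
  have hΦ0 : Φ (0, 0) = 0 := by simpa [Φ, H, sub_eq_zero, Setting.fmap] using hφ.2
  obtain ⟨u, hu0, huC, hu', hΦu⟩ := exists_implicit_curve hΦC hΦ'
  exact ⟨u, hu0, huC, hu', hΦu.mono fun s hs => sub_eq_zero.1 (hs.trans hΦ0)⟩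

theorem mem_tangentSet_of_dvC_eq (hr : 0 < r) (hψL : ∀ ν, S.L (singleC1 ν (ψ ν)).1.1 = 0)
    (hψ0 : ∀ ν, evC (ψ ν) 0 = 0) (hψ1 : ∀ ν, dvC (ψ ν) 0 = 1)
    {φ : C1 r (Fin n → ℝ)} (hφ : φ ∈ S.Xf) (hd : ∀ k, S.d k (S.Lof φ) = 0)
    {χ : C1 r (Fin n → ℝ)} (hχ : dvC χ 0 = fderiv ℝ S.g (S.hat φ) (fun _ => evC χ 0)) :
    χ ∈ tangentSet S.Xf φ := by
  obtain ⟨u, hu0, huC, hu', hsol⟩ := S.exists_solution_curve hr hψL hψ0 hψ1 hφ hd hχ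
  set c := affineFamily ψ φ χ
  have hpt : ((0 : ℝ), u 0) = (0, 0) := by rw [hu0]
  have hc0 : c (0, u 0) = φ := by simp [c, hu0]
  have hγC : ContDiffAt ℝ 1 (fun s => c (s, u s)) 0 :=
    (contDiff_affineFamily ψ φ χ).contDiffAt.comp 0 (contDiffAt_id.prodMk huC)
  have hγ' : HasDerivAt (fun s => c (s, u s)) χ 0 := by
    have h := (hasFDerivAt_affineFamily ψ φ χ (0, u 0)).comp_hasDerivAt 0
      ((hasDerivAt_id 0).prodMk hu')
    exact h.congr_deriv (by simp)
  have hWev : ∀ᶠ s in 𝓝 (0 : ℝ), S.Lof (c (s, u s)) ∈ S.W := by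
    simp only [c, S.Lof_affineFamily hψL]
    exact (continuous_const.add (continuous_id.smul continuous_const)).continuousAt
      |>.preimage_mem_nhds (by simpa using S.Wopen.mem_nhds hφ.1.1)
  have hVev : ∀ᶠ s in 𝓝 (0 : ℝ), S.hat (c (s, u s)) ∈ S.V :=
    ((S.contDiffAt_hat_affineFamily hψL hφ.1.1 fun k => (hd k).trans_lt hr).continuousAt.comp_of_eq
      (continuousAt_id.prodMk huC.continuousAt) hpt).preimage_mem_nhds
      (by simpa [hu0] using S.Vopen.mem_nhds hφ.1.2)
  have hX : ∀ᶠ s in 𝓝 (0 : ℝ), c (s, u s) ∈ S.Xf := by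
    filter_upwards [hWev, hVev, hsol] with s hsW hsV hs
    exact ⟨⟨hsW, hsV⟩, hs⟩
  simpa [hc0] using mem_tangentSet_of_eventually hγC hγ' hX

theorem tangentSet_eq (hr : 0 < r) (hψL : ∀ ν, S.L (singleC1 ν (ψ ν)).1.1 = 0)
    (hψ0 : ∀ ν, evC (ψ ν) 0 = 0) (hψ1 : ∀ ν, dvC (ψ ν) 0 = 1)
    {φ : C1 r (Fin n → ℝ)} (hφ : φ ∈ S.Xf) (hd : ∀ k, S.d k (S.Lof φ) = 0) :
    tangentSet S.Xf φ = {χ | dvC χ 0 = fderiv ℝ S.g (S.hat φ) (fun _ => evC χ 0)} :=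
  Set.ext fun _ =>
    ⟨S.dvC_eq_of_mem_tangentSet hφ hd, S.mem_tangentSet_of_dvC_eq hr hψL hψ0 hψ1 hφ hd⟩

theorem injOn_RKmap (hψ0 : ∀ ν, evC (ψ ν) 0 = 0) : InjOn (RKmap ψ) (S.XfJ Finset.univ) := by
  intro p hp q hq hpq
  have hev : evC p 0 = evC q 0 := by rw [← evC_RKmap_zero hψ0 p, hpq, evC_RKmap_zero hψ0]
  have hdv : dvC p 0 = dvC q 0 := by
    rw [hp.1.2, hq.1.2, Setting.fmap, Setting.fmap, S.hat_eq_const (S.d_eq_zero_of_mem_XfJ hp),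
      S.hat_eq_const (S.d_eq_zero_of_mem_XfJ hq), hev]
  rw [← RKmap_add_Ymap (ψ := ψ) p, ← RKmap_add_Ymap (ψ := ψ) q, hpq, hdv]

end Setting

variable {r : ℝ} {n kk : ℕ} {F : Type*} [NormedAddCommGroup F] [NormedSpace ℝ F]
  [FiniteDimensional ℝ F]

theorem statement4_general (hr : 0 < r) (S : Setting r n kk F)
    (ψ : Fin n → C1 r ℝ)
    (hψL : ∀ ν, S.L (singleC1 ν (ψ ν)).1.1 = 0)
    (hψ0 : ∀ ν, evC (ψ ν) 0 = 0)
    (hψ1 : ∀ ν, dvC (ψ ν) 0 = 1) :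
    Set.InjOn (RKmap ψ) (S.XfJ (Finset.univ : Finset (Fin kk))) ∧
    ∀ φ ∈ S.XfJ (Finset.univ : Finset (Fin kk)),
      Set.BijOn (RKmap ψ) (tangentSet S.Xf φ) (X0sub r n : Set (C1 r (Fin n → ℝ))) ∧
      ∃ σ : C1 r (Fin n → ℝ) → C1 r (Fin n → ℝ),
        ContinuousOn σ (X0sub r n : Set (C1 r (Fin n → ℝ))) ∧
        Set.InvOn σ (RKmap ψ) (tangentSet S.Xf φ) (X0sub r n : Set (C1 r (Fin n → ℝ))) := by
  refine ⟨S.injOn_RKmap hψ0, fun φ hφ => ?_⟩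
  set A : (Fin n → ℝ) → Fin n → ℝ := fun x => fderiv ℝ S.g (S.hat φ) fun _ => x
  have hA : Continuous A :=
    (fderiv ℝ S.g (S.hat φ)).continuous.comp (continuous_pi fun _ => continuous_id)
  rw [S.tangentSet_eq hr hψL hψ0 hψ1 hφ.1 (S.d_eq_zero_of_mem_XfJ hφ)]
  exact ⟨bijOn_RKmap hψ0 hψ1 A, RKmapInv ψ A, (continuous_RKmapInv hA).continuousOn,
    invOn_RKmapInv hψ0 hψ1 A⟩

/-- Proposition 3.2: `R^K` is injective on `X_{fK}` and defines a (topological) isomorphism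
from each tangent space `T_φX_f`, `φ ∈ X_{fK}`, onto `X₀`. -/
theorem statement4 (hr : 0 < r) (S : Setting r n kk F)
    (hUK : (S.UJ (Finset.univ : Finset (Fin kk))).Nonempty)
    (z : ℝ) (hz : z ∈ Set.Ioo (-r) 0) (ψ : Fin n → C1 r ℝ)
    (hψL : ∀ ν, S.L (singleC1 ν (ψ ν)).1.1 = 0)
    (hψ0 : ∀ ν, evC (ψ ν) 0 = 0)
    (hψ1 : ∀ ν, dvC (ψ ν) 0 = 1)
    (hψz : ∀ ν, ∀ t ∈ Set.Icc (-r) z, evC (ψ ν) t = 0) :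
    Set.InjOn (RKmap ψ) (S.XfJ (Finset.univ : Finset (Fin kk))) ∧
    ∀ φ ∈ S.XfJ (Finset.univ : Finset (Fin kk)),
      Set.BijOn (RKmap ψ) (tangentSet S.Xf φ) (X0sub r n : Set (C1 r (Fin n → ℝ))) ∧
      ∃ σ : C1 r (Fin n → ℝ) → C1 r (Fin n → ℝ),
        ContinuousOn σ (X0sub r n : Set (C1 r (Fin n → ℝ))) ∧
        Set.InvOn σ (RKmap ψ) (tangentSet S.Xf φ) (X0sub r n : Set (C1 r (Fin n → ℝ))) :=
  statement4_general hr S ψ hψL hψ0 hψ1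
end
end
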